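/- arXiv:2211.12595 — 2 statements merged into one kernel-verified Lean document; each statement's English description precedes it below -/
import Mathlib

section
/- For any piecewise constant function f = Σ_j θ_j 1_{I_j} on the uniform J^d partition of [0,1]^d and any p ≥ 1, the L^p(λ) projection of f onto the class M of coordinatewise nondecreasing functions on [0,1]^d exists and can be taken to be piecewise constant on the same partition; moreover any minimizer of ||f - h||_{p,λ} over piecewise constant monotone functions h on this partition achieves the infimum over all of M. -/
/-!
Averaging a monotone `h` over the blocks of the grid gives a monotone piecewise constant
function, since a block with larger index is, up to a null set, a translate of a smaller one by a
nonnegative vector. By Jensen's inequality for the convex function `t ↦ |c - t| ^ p`, this averaging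
does not increase the `L^p` distance to `pc θ`, which is constant on every block. So minimizing over
all monotone functions reduces to minimizing the continuous function
`η ↦ ∑ j, λ(I_j) * |θ j - η j| ^ p` over monotone coefficient vectors; clamping into the box
`[-∑ |θ j|, ∑ |θ j|]` preserves monotonicity and decreases every term, so a minimizer exists by
compactness.
-/

open MeasureTheory Real

noncomputable section

def unitCube (d : ℕ) : Set (Fin d → ℝ) := Set.Icc 0 1

def block (d J : ℕ) (j : Fin d → Fin J) : Set (Fin d → ℝ) :=
  {x | ∀ k, (if (j k : ℕ) = 0 then (0:ℝ) ≤ x k else ((j k : ℕ) : ℝ) / J < x k) ∧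
        x k ≤ (((j k : ℕ) : ℝ) + 1) / J}

def pc (d J : ℕ) (θ : (Fin d → Fin J) → ℝ) : (Fin d → ℝ) → ℝ :=
  fun x => ∑ j : Fin d → Fin J, Set.indicator (block d J j) (fun _ => θ j) x

def MonOn (d : ℕ) (f : (Fin d → ℝ) → ℝ) : Prop :=
  ∀ x ∈ unitCube d, ∀ y ∈ unitCube d, x ≤ y → f x ≤ f y

def blockAvg (d J : ℕ) (h : (Fin d → ℝ) → ℝ) : (Fin d → ℝ) → ℝ :=
  pc d J fun j => (∫ y in block d J j, h y) / (volume (block d J j)).toReal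

open Set Filter Function
open scoped ENNReal

theorem MonotoneOn.aemeasurable_restrict {ι : Type*} [Fintype ι] {s : Set (ι → ℝ)}
    {f : (ι → ℝ) → ℝ} (hf : MonotoneOn f s) (hs : s.OrdConnected) :
    AEMeasurable f (volume.restrict s) := by
  refine NullMeasurable.aemeasurable (measurable_of_Ioi fun c => ?_)
  have hsc : (s ∩ f ⁻¹' Ioi c).OrdConnected :=
    ⟨fun x hx y hy z hz => ⟨hs.out hx.1 hy.1 hz,
      lt_of_lt_of_le hx.2 (hf hx.1 (hs.out hx.1 hy.1 hz) hz.1)⟩⟩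
  refine (hsc.nullMeasurableSet.mono Measure.restrict_le_self).congr ?_
  filter_upwards [ae_restrict_mem₀ hs.nullMeasurableSet] with x hx
  exact propext (and_iff_right hx)

theorem convexOn_abs_sub_rpow (c : ℝ) {p : ℝ} (hp : 1 ≤ p) :
    ConvexOn ℝ univ fun t : ℝ => |c - t| ^ p := by
  refine ⟨convex_univ, fun x _ y _ a b ha hb hab => ?_⟩
  have hdist := (convexOn_univ_dist c).2 (mem_univ x) (mem_univ y) ha hb hab
  simp only [Real.dist_eq, smul_eq_mul] at hdist ⊢
  calc |c - (a * x + b * y)| ^ p ≤ (a * |c - x| + b * |c - y|) ^ p := by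
        rw [abs_sub_comm c, abs_sub_comm c x, abs_sub_comm c y]
        gcongr
    _ ≤ a * |c - x| ^ p + b * |c - y| ^ p := by
        simpa only [smul_eq_mul] using (convexOn_rpow hp).2 (mem_Ici.2 (abs_nonneg (c - x)))
          (mem_Ici.2 (abs_nonneg (c - y))) ha hb hab

theorem measureReal_mul_abs_sub_setAverage_rpow_le {α : Type*} [MeasurableSpace α]
    {μ : Measure α} {s : Set α} {f : α → ℝ} {p : ℝ} (hp : 1 ≤ p) (c : ℝ)
    (hs : μ s ≠ ∞) (hf : IntegrableOn f s μ)
    (hfp : IntegrableOn (fun x => |c - f x| ^ p) s μ) :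
    μ.real s * |c - (⨍ x in s, f x ∂μ)| ^ p ≤ ∫ x in s, |c - f x| ^ p ∂μ := by
  rcases eq_or_ne (μ s) 0 with h0 | h0
  · simp [measureReal_def, h0]
  have hcont : Continuous fun t : ℝ => |c - t| ^ p :=
    (continuous_const.sub continuous_id).abs.rpow_const fun _ => Or.inr (by linarith)
  have hjensen := (convexOn_abs_sub_rpow c hp).map_set_average_le hcont.continuousOn
    isClosed_univ h0 hs (Eventually.of_forall fun _ => mem_univ _) hf hfp
  calc μ.real s * |c - (⨍ x in s, f x ∂μ)| ^ p
      ≤ μ.real s * ⨍ x in s, |c - f x| ^ p ∂μ :=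
        mul_le_mul_of_nonneg_left hjensen measureReal_nonneg
    _ = ∫ x in s, |c - f x| ^ p ∂μ := measure_smul_setAverage _ hs

theorem integrableOn_of_abs_le {α : Type*} [MeasurableSpace α] {μ : Measure α} {s : Set α}
    (hs : μ s ≠ ∞) (hsm : MeasurableSet s) {f : α → ℝ}
    (hf : AEStronglyMeasurable f (μ.restrict s)) {C : ℝ} (hC : ∀ x ∈ s, |f x| ≤ C) :
    IntegrableOn f s μ :=
  haveI := isFiniteMeasure_restrict.2 hs
  Integrable.of_bound hf C (ae_restrict_of_forall_mem hsm hC)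

theorem exists_monotone_forall_sum_mul_abs_sub_rpow_le {ι : Type*} [Fintype ι] [Preorder ι]
    (w θ : ι → ℝ) {p : ℝ} (hw : 0 ≤ w) (hp : 0 ≤ p) :
    ∃ η : ι → ℝ, Monotone η ∧ ∀ η' : ι → ℝ, Monotone η' →
      ∑ i, w i * |θ i - η i| ^ p ≤ ∑ i, w i * |θ i - η' i| ^ p := by
  set C := ∑ i, |θ i|
  have hC : -C ≤ C := neg_le_self (Finset.sum_nonneg fun i _ => abs_nonneg (θ i))
  have hθ : ∀ i, θ i ∈ Icc (-C) C := fun i =>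
    abs_le.1 (Finset.single_le_sum (fun i _ => abs_nonneg (θ i)) (Finset.mem_univ i))
  set K := {η : ι → ℝ | Monotone η} ∩ Icc (fun _ => -C) fun _ => C
  have hK : IsCompact K := isCompact_Icc.inter_left isClosed_monotone
  have hcont : Continuous fun η : ι → ℝ => ∑ i, w i * |θ i - η i| ^ p :=
    continuous_finsetSum _ fun i _ => continuous_const.mul
      ((continuous_const.sub (continuous_apply i)).abs.rpow_const fun _ => Or.inr hp)
  obtain ⟨η, hηK, hηmin⟩ :=
    hK.exists_isMinOn ⟨fun _ => -C, monotone_const, le_rfl, fun _ => hC⟩ hcont.continuousOn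
  refine ⟨η, hηK.1, fun η' hη' => ?_⟩
  set η'' : ι → ℝ := fun i => projIcc (-C) C hC (η' i)
  have hη''K : η'' ∈ K := ⟨fun i i' hii' => monotone_projIcc hC (hη' hii'),
    fun i => (projIcc (-C) C hC (η' i)).2.1, fun i => (projIcc (-C) C hC (η' i)).2.2⟩
  refine (hηmin hη''K).trans (Finset.sum_le_sum fun i _ => ?_)
  have hclamp : |θ i - η'' i| ≤ |θ i - η' i| := by
    simpa only [η'', projIcc_of_mem hC (hθ i)] using
      abs_projIcc_sub_projIcc hC (c := θ i) (d := η' i)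
  gcongr
  exact hw i

namespace UniformGrid

variable {d J : ℕ}

def cell (J m : ℕ) : Set ℝ :=
  if m = 0 then Icc 0 (((m : ℝ) + 1) / J) else Ioc ((m : ℝ) / J) (((m : ℝ) + 1) / J)

def lowerCorner (J : ℕ) (j : Fin d → Fin J) : Fin d → ℝ := fun k => ((j k : ℕ) : ℝ) / J

def upperCorner (J : ℕ) (j : Fin d → Fin J) : Fin d → ℝ := fun k => (((j k : ℕ) : ℝ) + 1) / J

lemma cell_subset_Icc (m : ℕ) : cell J m ⊆ Icc ((m : ℝ) / J) (((m : ℝ) + 1) / J) := by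
  unfold cell
  split_ifs with hm
  · simp [hm]
  · exact Ioc_subset_Icc_self

lemma cell_ae_eq_Icc (m : ℕ) : cell J m =ᵐ[volume] Icc ((m : ℝ) / J) (((m : ℝ) + 1) / J) := by
  unfold cell
  split_ifs with hm
  · simp only [hm, Nat.cast_zero, zero_div]
    exact ae_eq_refl _
  · exact Ioc_ae_eq_Icc

lemma le_of_mem_cell_of_le {m m' : ℕ} {s t : ℝ} (hs : s ∈ cell J m) (ht : t ∈ cell J m')
    (hst : s ≤ t) : m ≤ m' := by
  by_contra! hlt
  have hm : m ≠ 0 := by omega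
  simp only [cell, hm, if_false, mem_Ioc] at hs
  have hcast : ((m' : ℝ) + 1) ≤ m := by exact_mod_cast hlt
  have : ((m' : ℝ) + 1) / J ≤ (m : ℝ) / J := by gcongr
  linarith [(cell_subset_Icc m' ht).2]

lemma exists_mem_cell (hJ : 0 < J) {t : ℝ} (ht : t ∈ Icc (0 : ℝ) 1) :
    ∃ m : Fin J, t ∈ cell J m := by
  have hJ' : (0 : ℝ) < J := by exact_mod_cast hJ
  set n := ⌈t * J⌉₊
  have hn_ge : t * J ≤ n := Nat.le_ceil _
  have hn_lt : (n : ℝ) < t * J + 1 := Nat.ceil_lt_add_one (by nlinarith [ht.1])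
  have hnJ : n ≤ J := Nat.ceil_le.2 (by nlinarith [ht.2])
  refine ⟨⟨n - 1, by omega⟩, ?_⟩
  have hup : t ≤ (((n - 1 : ℕ) : ℝ) + 1) / J := by
    rw [le_div_iff₀ hJ']
    have : (n : ℝ) ≤ ((n - 1 : ℕ) : ℝ) + 1 := by norm_cast; omega
    linarith
  by_cases hn : n - 1 = 0
  · simp only [cell, hn, if_true]
    exact ⟨ht.1, by simpa [hn] using hup⟩
  · simp only [cell, hn, if_false]
    refine ⟨?_, hup⟩
    rw [div_lt_iff₀ hJ', Nat.cast_sub (by omega)]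
    push_cast
    linarith

lemma block_eq_pi (j : Fin d → Fin J) : block d J j = univ.pi fun k => cell J (j k) := by
  ext x
  simp only [block, Set.mem_ofPred_eq, Set.mem_pi, mem_univ, true_implies, cell]
  refine forall_congr' fun k => ?_
  by_cases h : (j k : ℕ) = 0 <;> simp [h]

lemma measurableSet_block (j : Fin d → Fin J) : MeasurableSet (block d J j) := by
  rw [block_eq_pi]
  refine MeasurableSet.univ_pi fun k => ?_
  unfold cell
  split_ifs
  exacts [measurableSet_Icc, measurableSet_Ioc]

lemma block_subset_Icc (j : Fin d → Fin J) :
    block d J j ⊆ Icc (lowerCorner J j) (upperCorner J j) := by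
  rw [block_eq_pi, ← pi_univ_Icc]
  exact pi_mono fun k _ => cell_subset_Icc _

lemma block_ae_eq_Icc (j : Fin d → Fin J) :
    block d J j =ᵐ[volume] Icc (lowerCorner J j) (upperCorner J j) := by
  rw [block_eq_pi, ← pi_univ_Icc, volume_pi]
  exact Measure.ae_eq_set_pi fun k _ => cell_ae_eq_Icc _

lemma Icc_corner_subset_unitCube (j : Fin d → Fin J) :
    Icc (lowerCorner J j) (upperCorner J j) ⊆ unitCube d := by
  refine Icc_subset_Icc (fun k => by simp only [lowerCorner]; positivity) fun k => ?_
  exact div_le_one_of_le₀ (by exact_mod_cast (j k).isLt) (Nat.cast_nonneg J)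

lemma block_subset_unitCube (j : Fin d → Fin J) : block d J j ⊆ unitCube d :=
  (block_subset_Icc j).trans (Icc_corner_subset_unitCube j)

lemma upperCorner_mem_block (j : Fin d → Fin J) : upperCorner J j ∈ block d J j := by
  rw [block_eq_pi]
  intro k _
  have hJ : (0 : ℝ) < J := by exact_mod_cast (j k).pos
  simp only [cell, upperCorner]
  split_ifs
  · exact ⟨by positivity, le_rfl⟩
  · exact ⟨by gcongr; linarith, le_rfl⟩

lemma le_of_mem_block_of_le {j j' : Fin d → Fin J} {x y : Fin d → ℝ} (hx : x ∈ block d J j)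
    (hy : y ∈ block d J j') (hxy : x ≤ y) : j ≤ j' := by
  rw [block_eq_pi] at hx hy
  exact fun k => le_of_mem_cell_of_le (hx k trivial) (hy k trivial) (hxy k)

lemma eq_of_mem_block {j j' : Fin d → Fin J} {x : Fin d → ℝ} (hx : x ∈ block d J j)
    (hx' : x ∈ block d J j') : j = j' :=
  le_antisymm (le_of_mem_block_of_le hx hx' le_rfl) (le_of_mem_block_of_le hx' hx le_rfl)

lemma pairwise_disjoint_block : Pairwise (Disjoint on block d J) :=
  fun _ _ hne => disjoint_left.2 fun _ hx hx' => hne (eq_of_mem_block hx hx')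

lemma exists_mem_block (hJ : 0 < J) {x : Fin d → ℝ} (hx : x ∈ unitCube d) :
    ∃ j : Fin d → Fin J, x ∈ block d J j := by
  choose j hj using fun k => exists_mem_cell hJ ⟨hx.1 k, hx.2 k⟩
  exact ⟨j, by rw [block_eq_pi]; exact fun k _ => hj k⟩

lemma iUnion_block (hJ : 0 < J) : ⋃ j, block d J j = unitCube d :=
  Subset.antisymm (iUnion_subset block_subset_unitCube) fun _ hx =>
    mem_iUnion.2 (exists_mem_block hJ hx)

lemma volume_block (j : Fin d → Fin J) : volume (block d J j) = ENNReal.ofReal (1 / J) ^ d := by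
  rw [measure_congr (block_ae_eq_Icc j), Real.volume_Icc_pi]
  simp only [upperCorner, lowerCorner, add_div, add_sub_cancel_left, Finset.prod_const,
    Finset.card_univ, Fintype.card_fin]

lemma volume_block_ne_top (j : Fin d → Fin J) : volume (block d J j) ≠ ∞ := by
  rw [volume_block]
  exact ENNReal.pow_ne_top ENNReal.ofReal_ne_top

lemma pc_eq_of_mem_block (θ : (Fin d → Fin J) → ℝ) {j : Fin d → Fin J} {x : Fin d → ℝ}
    (hx : x ∈ block d J j) : pc d J θ x = θ j := by
  rw [pc, Finset.sum_eq_single j (fun j' _ hne => indicator_of_notMem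
    (fun hx' => hne (eq_of_mem_block hx' hx)) _) (by simp), indicator_of_mem hx]

lemma monOn_pc_iff (hJ : 0 < J) (η : (Fin d → Fin J) → ℝ) :
    MonOn d (pc d J η) ↔ Monotone η := by
  refine ⟨fun hmon j j' hjj' => ?_, fun hη x hx y hy hxy => ?_⟩
  · have hle : upperCorner J j ≤ upperCorner J j' := fun k => by
      simp only [upperCorner]
      gcongr
      exact hjj' k
    have hj := upperCorner_mem_block j
    have hj' := upperCorner_mem_block j'
    simpa only [pc_eq_of_mem_block η hj, pc_eq_of_mem_block η hj'] using
      hmon _ (block_subset_unitCube j hj) _ (block_subset_unitCube j' hj') hle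
  · obtain ⟨j, hj⟩ := exists_mem_block hJ hx
    obtain ⟨j', hj'⟩ := exists_mem_block hJ hy
    rw [pc_eq_of_mem_block η hj, pc_eq_of_mem_block η hj']
    exact hη (le_of_mem_block_of_le hj hj' hxy)

lemma integral_unitCube_eq_sum (hJ : 0 < J) {F : (Fin d → ℝ) → ℝ}
    (hF : ∀ j, IntegrableOn F (block d J j)) :
    ∫ x in unitCube d, F x = ∑ j, ∫ x in block d J j, F x := by
  rw [← iUnion_block hJ, integral_iUnion_fintype measurableSet_block pairwise_disjoint_block hF]

lemma integral_abs_pc_sub_pc_rpow (hJ : 0 < J) (p : ℝ) (θ η : (Fin d → Fin J) → ℝ) :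
    ∫ x in unitCube d, |pc d J θ x - pc d J η x| ^ p =
      ∑ j, volume.real (block d J j) * |θ j - η j| ^ p := by
  have hconst : ∀ j, EqOn (fun x => |pc d J θ x - pc d J η x| ^ p)
      (fun _ => |θ j - η j| ^ p) (block d J j) := fun j x hx => by
    simp only [pc_eq_of_mem_block _ hx]
  rw [integral_unitCube_eq_sum hJ fun j => (integrableOn_const (volume_block_ne_top j)).congr_fun
    (hconst j).symm (measurableSet_block j)]
  refine Finset.sum_congr rfl fun j _ => ?_
  rw [setIntegral_congr_fun (measurableSet_block j) (hconst j), setIntegral_const, smul_eq_mul]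

lemma blockAvg_eq_pc_setAverage (h : (Fin d → ℝ) → ℝ) :
    blockAvg d J h = pc d J fun j => ⨍ x in block d J j, h x := by
  simp only [blockAvg, setAverage_eq, measureReal_def, smul_eq_mul, div_eq_inv_mul]

end UniformGrid

namespace MonOn

open UniformGrid

variable {d J : ℕ} {h : (Fin d → ℝ) → ℝ}

lemma abs_le (hh : MonOn d h) {x : Fin d → ℝ} (hx : x ∈ unitCube d) : |h x| ≤ |h 0| + |h 1| := by
  have h0 := hh 0 (left_mem_Icc.2 zero_le_one) x hx hx.1
  have h1 := hh x hx 1 (right_mem_Icc.2 zero_le_one) hx.2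
  rw [_root_.abs_le]
  constructor <;> linarith [neg_abs_le (h 0), le_abs_self (h 1), abs_nonneg (h 0), abs_nonneg (h 1)]

lemma aemeasurable_block (hh : MonOn d h) (j : Fin d → Fin J) :
    AEMeasurable h (volume.restrict (block d J j)) :=
  (MonotoneOn.aemeasurable_restrict hh ordConnected_Icc).mono_measure
    (Measure.restrict_mono (block_subset_unitCube j) le_rfl)

lemma integrableOn_block (hh : MonOn d h) (j : Fin d → Fin J) : IntegrableOn h (block d J j) :=
  integrableOn_of_abs_le (volume_block_ne_top j) (measurableSet_block j)
    (hh.aemeasurable_block j).aestronglyMeasurable fun _ hx =>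
      hh.abs_le (block_subset_unitCube j hx)

lemma integrableOn_block_abs_sub_rpow (hh : MonOn d h) (j : Fin d → Fin J) (c : ℝ) {p : ℝ}
    (hp : 0 ≤ p) : IntegrableOn (fun x => |c - h x| ^ p) (block d J j) := by
  refine integrableOn_of_abs_le (C := (|c| + (|h 0| + |h 1|)) ^ p) (volume_block_ne_top j)
    (measurableSet_block j)
    (((hh.aemeasurable_block j).const_sub c).abs.pow_const p).aestronglyMeasurable fun x hx => ?_
  rw [abs_of_nonneg (by positivity)]
  gcongr
  exact (abs_sub _ _).trans (add_le_add_right (hh.abs_le (block_subset_unitCube j hx)) _)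

lemma setIntegral_block_mono (hh : MonOn d h) {j j' : Fin d → Fin J} (hjj' : j ≤ j') :
    ∫ x in block d J j, h x ≤ ∫ x in block d J j', h x := by
  set v := lowerCorner J j' - lowerCorner J j
  have hv : 0 ≤ v := fun k => sub_nonneg.2 <| by
    simp only [lowerCorner]
    gcongr
    exact hjj' k
  have hpre : (· + v) ⁻¹' Icc (lowerCorner J j') (upperCorner J j') =
      Icc (lowerCorner J j) (upperCorner J j) := by
    rw [preimage_add_const_Icc]
    congr 1 <;> ext k <;> simp only [v, lowerCorner, upperCorner, Pi.sub_apply] <;> ring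
  have hshift : ∀ x ∈ Icc (lowerCorner J j) (upperCorner J j),
      x + v ∈ Icc (lowerCorner J j') (upperCorner J j') := fun x hx => by
    rw [← hpre] at hx
    exact hx
  have hmp := measurePreserving_add_right volume v
  have hemb := measurableEmbedding_addRight v
  have hint' : IntegrableOn h (Icc (lowerCorner J j') (upperCorner J j')) :=
    (hh.integrableOn_block j').congr_set_ae (block_ae_eq_Icc j').symm
  have hint_shift :
      IntegrableOn (fun x => h (x + v)) (Icc (lowerCorner J j) (upperCorner J j)) := by
    rw [← hpre]
    exact (hmp.integrableOn_comp_preimage hemb).2 hint'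
  calc ∫ x in block d J j, h x = ∫ x in Icc (lowerCorner J j) (upperCorner J j), h x :=
        setIntegral_congr_set (block_ae_eq_Icc j)
    _ ≤ ∫ x in Icc (lowerCorner J j) (upperCorner J j), h (x + v) :=
        setIntegral_mono_on ((hh.integrableOn_block j).congr_set_ae (block_ae_eq_Icc j).symm)
          hint_shift measurableSet_Icc fun x hx =>
            hh x (Icc_corner_subset_unitCube j hx) (x + v)
              (Icc_corner_subset_unitCube j' (hshift x hx)) (le_add_of_nonneg_right hv)
    _ = ∫ x in Icc (lowerCorner J j') (upperCorner J j'), h x := by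
        rw [← hpre]
        exact hmp.setIntegral_preimage_emb hemb h _
    _ = ∫ x in block d J j', h x := (setIntegral_congr_set (block_ae_eq_Icc j')).symm

lemma monotone_setAverage_block (hh : MonOn d h) :
    Monotone fun j : Fin d → Fin J => ⨍ x in block d J j, h x := by
  intro j j' hjj'
  simp only [setAverage_eq, measureReal_def, volume_block, smul_eq_mul]
  exact mul_le_mul_of_nonneg_left (hh.setIntegral_block_mono hjj') (by positivity)

lemma blockAvg (hJ : 0 < J) (hh : MonOn d h) : MonOn d (blockAvg d J h) := by
  rw [blockAvg_eq_pc_setAverage]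
  exact (monOn_pc_iff hJ _).2 hh.monotone_setAverage_block

end MonOn

namespace UniformGrid

variable {d J : ℕ}

theorem integral_abs_pc_sub_blockAvg_rpow_le (hJ : 0 < J) {p : ℝ} (hp : 1 ≤ p)
    (θ : (Fin d → Fin J) → ℝ) {h : (Fin d → ℝ) → ℝ} (hh : MonOn d h) :
    ∫ x in unitCube d, |pc d J θ x - blockAvg d J h x| ^ p ≤
      ∫ x in unitCube d, |pc d J θ x - h x| ^ p := by
  have hp0 : 0 ≤ p := by linarith
  have hblock : ∀ j, EqOn (fun x => |pc d J θ x - h x| ^ p) (fun x => |θ j - h x| ^ p)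
      (block d J j) := fun j x hx => by
    simp only [pc_eq_of_mem_block θ hx]
  rw [blockAvg_eq_pc_setAverage, integral_abs_pc_sub_pc_rpow hJ,
    integral_unitCube_eq_sum hJ fun j => (hh.integrableOn_block_abs_sub_rpow j (θ j) hp0).congr_fun
      (hblock j).symm (measurableSet_block j)]
  gcongr with j
  rw [setIntegral_congr_fun (measurableSet_block j) (hblock j)]
  exact measureReal_mul_abs_sub_setAverage_rpow_le hp (θ j) (volume_block_ne_top j)
    (hh.integrableOn_block j) (hh.integrableOn_block_abs_sub_rpow j (θ j) hp0)

theorem exists_monOn_pc_forall_le (hJ : 0 < J) {p : ℝ} (hp : 0 ≤ p) (θ : (Fin d → Fin J) → ℝ) :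
    ∃ η : (Fin d → Fin J) → ℝ, MonOn d (pc d J η) ∧ ∀ η', MonOn d (pc d J η') →
      ∫ x in unitCube d, |pc d J θ x - pc d J η x| ^ p ≤
        ∫ x in unitCube d, |pc d J θ x - pc d J η' x| ^ p := by
  obtain ⟨η, hη, hmin⟩ := exists_monotone_forall_sum_mul_abs_sub_rpow_le
    (fun j => volume.real (block d J j)) θ (fun _ => measureReal_nonneg) hp
  refine ⟨η, (monOn_pc_iff hJ η).2 hη, fun η' hη' => ?_⟩
  rw [integral_abs_pc_sub_pc_rpow hJ, integral_abs_pc_sub_pc_rpow hJ]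
  exact hmin η' ((monOn_pc_iff hJ η').1 hη')

theorem integral_abs_pc_sub_rpow_le_of_minimal (hJ : 0 < J) {p : ℝ} (hp : 1 ≤ p)
    {θ η : (Fin d → Fin J) → ℝ} (hmin : ∀ η', MonOn d (pc d J η') →
      ∫ x in unitCube d, |pc d J θ x - pc d J η x| ^ p ≤
        ∫ x in unitCube d, |pc d J θ x - pc d J η' x| ^ p)
    {h : (Fin d → ℝ) → ℝ} (hh : MonOn d h) :
    ∫ x in unitCube d, |pc d J θ x - pc d J η x| ^ p ≤ ∫ x in unitCube d, |pc d J θ x - h x| ^ p :=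
  (hmin _ (hh.blockAvg hJ)).trans (integral_abs_pc_sub_blockAvg_rpow_le hJ hp θ hh)

end UniformGrid

open UniformGrid in
/-- The L^p(λ) projection of a piecewise constant function onto the monotone class exists,
can be taken piecewise constant, and any monotone piecewise constant minimizer achieves the
infimum over all monotone functions. -/
theorem Lp_projection_piecewise (d J : ℕ) (hJ : 0 < J) (p : ℝ) (hp : 1 ≤ p)
    (θ : (Fin d → Fin J) → ℝ) :
    (∃ η : (Fin d → Fin J) → ℝ, MonOn d (pc d J η) ∧
        ∀ h : (Fin d → ℝ) → ℝ, MonOn d h →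
          (∫ x in unitCube d, |pc d J θ x - pc d J η x| ^ p) ≤
            ∫ x in unitCube d, |pc d J θ x - h x| ^ p) ∧
    (∀ η : (Fin d → Fin J) → ℝ, MonOn d (pc d J η) →
        (∀ η' : (Fin d → Fin J) → ℝ, MonOn d (pc d J η') →
          (∫ x in unitCube d, |pc d J θ x - pc d J η x| ^ p) ≤
            ∫ x in unitCube d, |pc d J θ x - pc d J η' x| ^ p) →
        ∀ h : (Fin d → ℝ) → ℝ, MonOn d h →
          (∫ x in unitCube d, |pc d J θ x - pc d J η x| ^ p) ≤
            ∫ x in unitCube d, |pc d J θ x - h x| ^ p) := by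
  obtain ⟨η, hη, hmin⟩ := exists_monOn_pc_forall_le hJ (by linarith) θ
  exact ⟨⟨η, hη, fun _ => integral_abs_pc_sub_rpow_le_of_minimal hJ hp hmin⟩,
    fun _ _ hmin _ => integral_abs_pc_sub_rpow_le_of_minimal hJ hp hmin⟩
end
end

section
/- Let f : [0,1]^d → ℝ be coordinatewise nondecreasing. For each multi-index j ∈ {1,...,J}^d pick θ_j between f((j-1⃗)/J) and f(j/J), and define f_J = Σ_j θ_j 1_{I_j}. Then for any probability measure G* on [0,1]^d with max_j G*(I_j) ≤ C/J^d, one has ||f - f_J||_{1,G*} ≤ C' · d · (f(1⃗) - f(0⃗)) / J for a constant C' depending only on C. -/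
open MeasureTheory Real

noncomputable section

/-! On the block `I_j` containing `x`, both `f x` and `θ_j` lie between the values of `f` at the
lower and upper corners of `I_j`, so `|f - f_J|` is bounded by the block oscillation
`osc_j = f(j/J) - f((j - 1⃗)/J)`, and the `G*`-integral by `(C / J^d) ∑_j osc_j`.
The sum of the oscillations is at most `d J^(d-1) (f 1⃗ - f 0⃗)`, by induction on `d`: split each
diagonal step `j ↦ j + 1⃗` into a step in the first coordinate followed by a diagonal step in the
others. The first steps telescope along the `J^(d-1)` lines in the first direction, each line
contributing at most `f 1⃗ - f 0⃗`; the second ones are diagonal sums on the `J` slices. -/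

open Finset

lemma sum_diagonal_increments_succ {d J : ℕ} (F : (Fin (d + 1) → ℕ) → ℝ) :
    ∑ j : Fin (d + 1) → Fin J, (F (fun k => j k + 1) - F (fun k => j k)) =
      ∑ v : Fin d → Fin J, ∑ a : Fin J,
          (F (Fin.cons (a + 1) fun k => v k + 1) - F (Fin.cons a fun k => v k + 1)) +
        ∑ a : Fin J, ∑ v : Fin d → Fin J,
          (F (Fin.cons a fun k => v k + 1) - F (Fin.cons a fun k => v k)) := by
  have comp_cons (g : Fin J → ℕ) (a : Fin J) (v : Fin d → Fin J) :
      (fun k => g ((Fin.cons a v : Fin (d + 1) → Fin J) k)) = Fin.cons (g a) fun k => g (v k) :=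
    Fin.comp_cons g a v
  rw [← (Fin.consEquiv fun _ => Fin J).sum_comp, Fintype.sum_prod_type]
  conv_rhs => rw [sum_comm, ← sum_add_distrib]
  simp only [Fin.consEquiv_apply, comp_cons (· + 1), comp_cons (↑), ← sum_add_distrib]
  exact sum_congr rfl fun a _ => sum_congr rfl fun v _ => by ring

theorem sum_diagonal_increments_le {J : ℕ} :
    ∀ {d : ℕ} {F : (Fin d → ℕ) → ℝ}, MonotoneOn F (Set.Iic fun _ => J) →
      ∑ j : Fin d → Fin J, (F (fun k => j k + 1) - F (fun k => j k)) ≤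
        d * J ^ (d - 1) * (F (fun _ => J) - F 0)
  | 0, F, _ => by
    simp only [Fintype.sum_unique, CharP.cast_eq_zero, zero_mul]
    rw [Subsingleton.elim (fun _ => _) fun k => _, sub_self]
  | d + 1, F, hF => by
    rw [sum_diagonal_increments_succ, ← Fin.cons_self_tail (0 : Fin (d + 1) → ℕ)]
    rw [← Fin.cons_self_tail (fun _ => J)] at hF ⊢
    simp only [Fin.tail_def, Pi.zero_apply] at hF ⊢
    have mono {a b : ℕ} {m n : Fin d → ℕ} (hab : a ≤ b) (hmn : m ≤ n) (hb : b ≤ J)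
        (hn : n ≤ fun _ => J) : F (Fin.cons a m) ≤ F (Fin.cons b n) :=
      hF (Fin.cons_le_cons.2 ⟨hab.trans hb, hmn.trans hn⟩) (Fin.cons_le_cons.2 ⟨hb, hn⟩)
        (Fin.cons_le_cons.2 ⟨hab, hmn⟩)
    set Δ := F (Fin.cons J fun _ => J) - F (Fin.cons 0 fun _ => 0)
    have line_le (v : Fin d → ℕ) (hv : v ≤ fun _ => J) :
        ∑ a : Fin J, (F (Fin.cons (a + 1) v) - F (Fin.cons a v)) ≤ Δ := by
      rw [Fin.sum_univ_eq_sum_range (fun a => F (Fin.cons (a + 1) v) - F (Fin.cons a v)),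
        sum_range_sub fun a => F (Fin.cons a v)]
      have htop := mono le_rfl hv le_rfl le_rfl
      have hbot := mono (Nat.zero_le 0) (fun _ => Nat.zero_le _) (Nat.zero_le J) hv
      linarith
    have slice_le (a : Fin J) :
        ∑ v : Fin d → Fin J, (F (Fin.cons a fun k => v k + 1) - F (Fin.cons a fun k => v k)) ≤
          d * J ^ (d - 1) * Δ := by
      refine (sum_diagonal_increments_le fun m hm n hn hmn => mono le_rfl hmn a.is_le' hn).trans ?_
      have htop := mono a.is_le' le_rfl le_rfl le_rfl
      have hbot : F (Fin.cons 0 fun _ => 0) ≤ F (Fin.cons a 0) :=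
        mono (Nat.zero_le a) le_rfl a.is_le' fun _ => Nat.zero_le _
      gcongr
      linarith
    calc _ ≤ ∑ _v : Fin d → Fin J, Δ + ∑ _a : Fin J, d * J ^ (d - 1) * Δ :=
          add_le_add (sum_le_sum fun v _ => line_le _ fun k => (v k).is_lt)
            (sum_le_sum fun a _ => slice_le a)
      _ = (d + 1 : ℕ) * J ^ (d + 1 - 1) * Δ := by
          rcases d with _ | d
          · simp
          · simp [pow_succ]; ring

section Blocks

variable {d J : ℕ}

/- `⌈t J⌉₊ - 1` is the index of the block interval containing `t`; the truncated subtraction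
is what makes the closed first interval `[0, 1/J]` (where `⌈t J⌉₊ ∈ {0, 1}`) get index `0`. -/
lemma block_coord_iff {m : ℕ} (hJ : 0 < J) (t : ℝ) :
    ((if m = 0 then (0 : ℝ) ≤ t else (m : ℝ) / J < t) ∧ t ≤ ((m : ℝ) + 1) / J) ↔
      0 ≤ t ∧ ⌈t * J⌉₊ - 1 = m := by
  have hJ' : (0 : ℝ) < J := by exact_mod_cast hJ
  rcases Nat.eq_zero_or_pos m with rfl | hm
  · simp only [if_true, Nat.cast_zero, zero_add, le_div_iff₀ hJ', Nat.sub_eq_zero_iff_le,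
      Nat.ceil_le, Nat.cast_one]
  · rw [if_neg hm.ne', div_lt_iff₀ hJ', le_div_iff₀ hJ',
      show ⌈t * J⌉₊ - 1 = m ↔ ⌈t * J⌉₊ = m + 1 by omega, Nat.ceil_eq_iff m.succ_ne_zero,
      Nat.succ_sub_one, Nat.cast_succ]
    exact ⟨fun h => ⟨nonneg_of_mul_nonneg_left ((Nat.cast_nonneg m).trans h.1.le) hJ', h⟩,
      And.right⟩

lemma mem_block_iff {j : Fin d → Fin J} {x : Fin d → ℝ} :
    x ∈ block d J j ↔ ∀ k, 0 ≤ x k ∧ ⌈x k * J⌉₊ - 1 = j k :=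
  forall_congr' fun k => block_coord_iff (j k).pos (x k)

lemma eq_of_mem_block {j j' : Fin d → Fin J} {x : Fin d → ℝ}
    (h : x ∈ block d J j) (h' : x ∈ block d J j') : j = j' :=
  funext fun k => Fin.ext <| ((mem_block_iff.1 h k).2).symm.trans (mem_block_iff.1 h' k).2

lemma exists_mem_block (hJ : 0 < J) {x : Fin d → ℝ} (hx : x ∈ unitCube d) :
    ∃ j, x ∈ block d J j := by
  have hJ' : (0 : ℝ) < J := by exact_mod_cast hJ
  have hlt (k : Fin d) : ⌈x k * J⌉₊ - 1 < J := by
    have : ⌈x k * J⌉₊ ≤ J := Nat.ceil_le.2 (mul_le_of_le_one_left hJ'.le (hx.2 k))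
    omega
  exact ⟨fun k => ⟨_, hlt k⟩, mem_block_iff.2 fun k => ⟨hx.1 k, rfl⟩⟩

lemma pc_eq_of_mem_block (θ : (Fin d → Fin J) → ℝ) {j : Fin d → Fin J}
    {x : Fin d → ℝ} (hx : x ∈ block d J j) : pc d J θ x = θ j := by
  rw [pc, Finset.sum_eq_single j, Set.indicator_of_mem hx]
  · exact fun j' _ hj' => Set.indicator_of_notMem (fun h => hj' (eq_of_mem_block h hx)) _
  · exact fun h => absurd (mem_univ j) h

lemma measurableSet_block (j : Fin d → Fin J) : MeasurableSet (block d J j) := by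
  simp only [block, Set.ofPred_forall, Set.ofPred_and]
  refine .iInter fun k => .inter ?_ (measurableSet_le (measurable_pi_apply k) measurable_const)
  split_ifs
  exacts [measurableSet_le measurable_const (measurable_pi_apply k),
    measurableSet_lt measurable_const (measurable_pi_apply k)]

def lowerCorner (J : ℕ) (j : Fin d → Fin J) : Fin d → ℝ := fun k => ((j k : ℕ) : ℝ) / J

def upperCorner (J : ℕ) (j : Fin d → Fin J) : Fin d → ℝ :=
  fun k => (((j k : ℕ) : ℝ) + 1) / J

lemma lowerCorner_le_of_mem_block {j : Fin d → Fin J} {x : Fin d → ℝ}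
    (hx : x ∈ block d J j) : lowerCorner J j ≤ x := fun k => by
  have hlow := (hx k).1
  split_ifs at hlow with h
  · simpa [lowerCorner, h] using hlow
  · exact hlow.le

lemma le_upperCorner_of_mem_block {j : Fin d → Fin J} {x : Fin d → ℝ}
    (hx : x ∈ block d J j) : x ≤ upperCorner J j := fun k => (hx k).2

lemma div_mem_unitCube {n : Fin d → ℕ} (hn : n ≤ fun _ => J) :
    (fun k => (n k : ℝ) / J) ∈ unitCube d :=
  ⟨fun k => by positivity, fun k => div_le_one_of_le₀ (Nat.cast_le.2 (hn k)) J.cast_nonneg⟩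

lemma lowerCorner_mem_unitCube (j : Fin d → Fin J) : lowerCorner J j ∈ unitCube d :=
  div_mem_unitCube fun k => (j k).is_le'

lemma upperCorner_mem_unitCube (j : Fin d → Fin J) : upperCorner J j ∈ unitCube d := by
  unfold upperCorner
  simpa using div_mem_unitCube (J := J) (n := fun k => j k + 1) fun k => (j k).is_lt

lemma abs_sub_pc_le (hJ : 0 < J) {f : (Fin d → ℝ) → ℝ} (hf : MonOn d f)
    {θ : (Fin d → Fin J) → ℝ}
    (hθ : ∀ j, θ j ∈ Set.Icc (f (lowerCorner J j)) (f (upperCorner J j)))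
    {x : Fin d → ℝ} (hx : x ∈ unitCube d) :
    |f x - pc d J θ x| ≤ pc d J (fun j => f (upperCorner J j) - f (lowerCorner J j)) x := by
  obtain ⟨j, hj⟩ := exists_mem_block hJ hx
  rw [pc_eq_of_mem_block _ hj, pc_eq_of_mem_block _ hj, abs_sub_le_iff]
  have hlow := hf _ (lowerCorner_mem_unitCube j) x hx (lowerCorner_le_of_mem_block hj)
  have hupp := hf x hx _ (upperCorner_mem_unitCube j) (le_upperCorner_of_mem_block hj)
  constructor <;> linarith [(hθ j).1, (hθ j).2]

lemma integrable_pc (θ : (Fin d → Fin J) → ℝ) (μ : Measure (Fin d → ℝ))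
    [IsFiniteMeasure μ] : Integrable (pc d J θ) μ :=
  integrable_finsetSum _ fun j _ => (integrable_const (θ j)).indicator (measurableSet_block j)

lemma integral_pc (θ : (Fin d → Fin J) → ℝ) (μ : Measure (Fin d → ℝ))
    [IsFiniteMeasure μ] : ∫ x, pc d J θ x ∂μ = ∑ j, θ j * μ.real (block d J j) := by
  unfold pc
  rw [integral_finsetSum _ fun j _ =>
    (integrable_const (θ j)).indicator (measurableSet_block j)]
  simp_rw [integral_indicator_const _ (measurableSet_block _), smul_eq_mul, mul_comm]

lemma sum_oscillation_le (hJ : 0 < J) {f : (Fin d → ℝ) → ℝ} (hf : MonOn d f) :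
    ∑ j : Fin d → Fin J, (f (upperCorner J j) - f (lowerCorner J j)) ≤
      d * J ^ (d - 1) * (f 1 - f 0) := by
  have hmono : MonotoneOn (fun n : Fin d → ℕ => f fun k => (n k : ℝ) / J)
      (Set.Iic fun _ => J) := fun m hm n hn hmn =>
    hf _ (div_mem_unitCube hm) _ (div_mem_unitCube hn) fun k =>
      div_le_div_of_nonneg_right (Nat.cast_le.2 (hmn k)) J.cast_nonneg
  have hJ' : (J : ℝ) ≠ 0 := by exact_mod_cast hJ.ne'
  have h := sum_diagonal_increments_le hmono
  simp only [Nat.cast_add, Nat.cast_one, div_self hJ', Pi.zero_apply, Nat.cast_zero, zero_div] at h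
  exact h

theorem integral_abs_sub_pc_le (hJ : 0 < J) {f : (Fin d → ℝ) → ℝ} (hf : MonOn d f)
    {θ : (Fin d → Fin J) → ℝ}
    (hθ : ∀ j, θ j ∈ Set.Icc (f (lowerCorner J j)) (f (upperCorner J j)))
    {μ : Measure (Fin d → ℝ)} [IsFiniteMeasure μ] {C : ℝ}
    (hμ : ∀ j, μ.real (block d J j) ≤ C / J ^ d) :
    ∫ x in unitCube d, |f x - pc d J θ x| ∂μ ≤ C * d * (f 1 - f 0) / J := by
  set osc := fun j => f (upperCorner J j) - f (lowerCorner J j)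
  have osc_nonneg (j) : 0 ≤ osc j := sub_nonneg.2 ((hθ j).1.trans (hθ j).2)
  have hCJ : 0 ≤ C / J ^ d := measureReal_nonneg.trans (hμ fun _ => ⟨0, hJ⟩)
  calc ∫ x in unitCube d, |f x - pc d J θ x| ∂μ
      ≤ ∫ x in unitCube d, pc d J osc x ∂μ :=
        integral_mono_of_nonneg (.of_forall fun _ => abs_nonneg _) (integrable_pc osc μ).restrict
          ((ae_restrict_iff' measurableSet_Icc).2 (.of_forall fun _ hx => abs_sub_pc_le hJ hf hθ hx))
    _ ≤ ∫ x, pc d J osc x ∂μ :=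
        setIntegral_le_integral (integrable_pc osc μ) (.of_forall fun x =>
          sum_nonneg fun j _ => Set.indicator_nonneg (fun _ _ => osc_nonneg j) x)
    _ = ∑ j, osc j * μ.real (block d J j) := integral_pc osc μ
    _ ≤ ∑ j, osc j * (C / J ^ d) :=
        sum_le_sum fun j _ => mul_le_mul_of_nonneg_left (hμ j) (osc_nonneg j)
    _ = C / J ^ d * ∑ j, osc j := by rw [← sum_mul, mul_comm]
    _ ≤ C / J ^ d * (d * J ^ (d - 1) * (f 1 - f 0)) := by
        gcongr; exact sum_oscillation_le hJ hf
    _ = C * d * (f 1 - f 0) / J := by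
        rcases d with _ | d
        · simp
        · field_simp; simp [pow_succ]; ring

end Blocks

theorem monotone_L1_approximation_general (C : ℝ) :
    ∃ C' : ℝ, 0 < C' ∧
      ∀ (d J : ℕ), 0 < J →
        ∀ (f : (Fin d → ℝ) → ℝ), MonOn d f →
        ∀ θ : (Fin d → Fin J) → ℝ,
          (∀ j : Fin d → Fin J,
            θ j ∈ Set.Icc (f (fun k => ((j k : ℕ) : ℝ) / J))
                          (f (fun k => (((j k : ℕ) : ℝ) + 1) / J))) →
        ∀ (G : Measure (Fin d → ℝ)), IsProbabilityMeasure G →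
          (∀ j : Fin d → Fin J, (G (block d J j)).toReal ≤ C / (J : ℝ) ^ d) →
          (∫ x in unitCube d, |f x - pc d J θ x| ∂G) ≤
            C' * d * (f 1 - f 0) / J := by
  refine ⟨max C 1, lt_max_of_lt_right one_pos, fun d J hJ f hf θ hθ G _ hG => ?_⟩
  exact integral_abs_sub_pc_le hJ hf hθ fun j =>
    (hG j).trans (div_le_div_of_nonneg_right (le_max_left C 1) (by positivity))

/-- L¹(G*) approximation of a multivariate monotone function by a blockwise constant
function, at rate d·(f(1)-f(0))/J, for any probability measure with block masses
bounded by C/J^d. -/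
theorem monotone_L1_approximation (C : ℝ) (hC : 0 ≤ C) :
    ∃ C' : ℝ, 0 < C' ∧
      ∀ (d J : ℕ), 0 < J →
        ∀ (f : (Fin d → ℝ) → ℝ), MonOn d f →
        ∀ θ : (Fin d → Fin J) → ℝ,
          (∀ j : Fin d → Fin J,
            θ j ∈ Set.Icc (f (fun k => ((j k : ℕ) : ℝ) / J))
                          (f (fun k => (((j k : ℕ) : ℝ) + 1) / J))) →
        ∀ (G : Measure (Fin d → ℝ)), IsProbabilityMeasure G →
          (∀ j : Fin d → Fin J, (G (block d J j)).toReal ≤ C / (J : ℝ) ^ d) →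
          (∫ x in unitCube d, |f x - pc d J θ x| ∂G) ≤
            C' * d * (f 1 - f 0) / J :=
  monotone_L1_approximation_general C
end
end
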